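/- For τ ∈ (0, 1/4), let a₁ < b₁ be the two real roots of q₁ and let D(z) = −2z⁶ + 3z³ + cz² − 3τ. Then: for 0 < τ < 1/12, D has no zeros in the open interval (a₁, b₁); for 1/12 < τ < 1/4, D has exactly one zero in (a₁, b₁); D(b₁) = 0 if and only if τ = 1/12; and D(a₁) ≠ 0 for all τ ∈ (0, 1/4). -/

import Mathlib

noncomputable section

/-- The constant `c = −(243(1−4τ)²/64)^{1/3}` (real cube root). -/
def ccf (τ : ℝ) : ℝ := -(243 * (1 - 4 * τ) ^ 2 / 64) ^ ((1 : ℝ) / 3)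

/-- `R(z) = 3z⁴ − 3z − c`. -/
def RR (τ : ℝ) (z : ℂ) : ℂ := 3 * z ^ 4 - 3 * z - (ccf τ : ℂ)

/-- `D(z) = −2z⁶ + 3z³ + cz² − 3τ`. -/
def DD (τ : ℝ) (z : ℂ) : ℂ :=
  -2 * z ^ 6 + 3 * z ^ 3 + (ccf τ : ℂ) * z ^ 2 - 3 * (τ : ℂ)

/-- The quartic `q₁`. -/
def q1 (τ : ℝ) (z : ℂ) : ℂ :=
  ((256 / (3 : ℝ) ^ ((5 : ℝ) / 3) * (1 - 4 * τ) ^ ((1 : ℝ) / 3) : ℝ) : ℂ) * z ^ 4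
    + (128 / 9 : ℂ) * z ^ 3
    + ((16 / (3 : ℝ) ^ ((1 : ℝ) / 3) * (1 - 4 * τ) ^ ((2 : ℝ) / 3) : ℝ) : ℂ) * z ^ 2
    - ((32 * (3 : ℝ) ^ ((1 : ℝ) / 3) * (1 - 4 * τ) ^ ((1 : ℝ) / 3) : ℝ) : ℂ) * z
    + ((16 * (1 - 8 * τ) : ℝ) : ℂ)

/-- The linear factor `q₂`. -/
def q2 (τ : ℝ) (z : ℂ) : ℂ :=
  (((3 : ℝ) ^ ((1 : ℝ) / 3) * (1 - 4 * τ) ^ ((1 : ℝ) / 3) : ℝ) : ℂ) * z - 1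

/-- The double point `b_* = (3(1−4τ))^{−1/3}`. -/
def bstar (τ : ℝ) : ℝ := (3 * (1 - 4 * τ)) ^ (-(1 : ℝ) / 3)

/-!
With `u = (3(1 − 4τ))^{1/3}` one has `u³ = 3 − 12τ`, `c = −3u²/4`, `q₁ = (16/9) Q u` and
`D = −S u / 4`, so that `τ ≶ 1/12` reads `u³ ≷ 2`.

At a root of `Q u` the signs of `S`, `Q'`, `H` and `u³ − 2` are read off a rational
parametrisation of the curve `Q u z = 0` (see `NodeParam`). At the left root `a₁` the quartic is
decreasing, which forces `S > 0`; at the right root `b₁` it is increasing, which forces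
`sign S = sign (u³ − 2)` and, when `u³ > 2`, `H < 0`.

Finally `S > 0` on `(−∞, 0]`, and since `S' = 6 z H` with `H` convex, the mean value theorem
rules out a zero of `S` below a point `b` with `H b ≤ 0 < S b`, and two zeros below a point `b`
with `S b < 0`.
-/

open Set

lemma pos_of_pos_of_forall_ne_zero {f : ℝ → ℝ} (hf : Continuous f) {x y : ℝ} (hy : 0 < f y)
    (h : ∀ t ∈ uIcc x y, f t ≠ 0) : 0 < f x := by
  by_contra! hx
  obtain ⟨t, ht, hft⟩ := intermediate_value_uIcc (a := x) (b := y) hf.continuousOn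
    (show (0 : ℝ) ∈ uIcc (f x) (f y) from mem_uIcc.mpr (Or.inl ⟨hx, hy.le⟩))
  exact h t ht hft

lemma HasDerivAt.nonneg_of_pos_right {f : ℝ → ℝ} {f' x : ℝ} (hf : HasDerivAt f f' x)
    (hx : f x = 0) (h : ∀ y, x < y → 0 < f y) : 0 ≤ f' := by
  refine ge_of_tendsto hf.tendsto_slope_zero_right ?_
  filter_upwards [self_mem_nhdsWithin] with t (ht : 0 < t)
  rw [hx, sub_zero, smul_eq_mul]
  exact (mul_pos (inv_pos.mpr ht) (h _ (by linarith))).le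

lemma HasDerivAt.nonpos_of_pos_left {f : ℝ → ℝ} {f' x : ℝ} (hf : HasDerivAt f f' x)
    (hx : f x = 0) (h : ∀ y, y < x → 0 < f y) : f' ≤ 0 := by
  refine le_of_tendsto hf.tendsto_slope_zero_left ?_
  filter_upwards [self_mem_nhdsWithin] with t (ht : t < 0)
  rw [hx, sub_zero, smul_eq_mul]
  exact (mul_neg_of_neg_of_pos (inv_lt_zero.mpr ht) (h _ (by linarith))).le

lemma sign_eq_sign_of_mul_eq {α : Type*} [Ring α] [LinearOrder α] [IsStrictOrderedRing α]
    {a b c d : α} (hc : 0 < c) (hd : 0 < d) (h : c * a = d * b) :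
    SignType.sign a = SignType.sign b := by
  simpa [sign_mul, sign_pos hc, sign_pos hd] using congrArg SignType.sign h

namespace ZerosOfD

def Q (u z : ℝ) : ℝ :=
  16 * u * z ^ 4 + 8 * z ^ 3 + 3 * u ^ 2 * z ^ 2 - 18 * u * z + 6 * u ^ 3 - 9

def Q' (u z : ℝ) : ℝ := 64 * u * z ^ 3 + 24 * z ^ 2 + 6 * u ^ 2 * z - 18 * u

def S (u z : ℝ) : ℝ := 8 * z ^ 6 - 12 * z ^ 3 + 3 * u ^ 2 * z ^ 2 + 3 - u ^ 3

def H (u z : ℝ) : ℝ := 8 * z ^ 4 - 6 * z + u ^ 2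

def nodeWeight (σ : ℝ) : ℝ := 16 * σ ^ 2 + 3 * σ + 6

lemma nodeWeight_pos (σ : ℝ) : 0 < nodeWeight σ := by
  unfold nodeWeight; nlinarith [sq_nonneg (8 * σ + 3 / 4)]

/-- In the coordinates `w = u z`, `s = z³` one has
`z³ Q u z = 16ws² + 8s² + 3w²s − 18ws + 6w³ − 9s`, a cubic with a node at `(−3/5, 9/10)`.
`NodeParam u z σ` says that `(w, s)` lies on the line of slope `σ` through the node:
`s − 9/10 = σ (w + 3/5)`; these are the resulting formulas for `s`, `w` and `u³ = w³/s`. -/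
structure NodeParam (u z σ : ℝ) : Prop where
  cube_eq : 5 * nodeWeight σ * z ^ 3 = (3 + 2 * σ) ^ 3
  mul_eq : 2 * nodeWeight σ * (u * z) = (3 + 2 * σ) * (3 - 8 * σ)
  cube_u_eq : 8 * nodeWeight σ ^ 2 * u ^ 3 = 5 * (3 - 8 * σ) ^ 3

variable {u z σ : ℝ}

/-- The vertical line `w = −3/5` meets the cubic only at the node, where `z > 0`. -/
lemma mul_add_ne_zero_of_Q_eq_zero (hu : 0 < u) (hQ : Q u z = 0) : u * z + 3 / 5 ≠ 0 := by
  intro hw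
  unfold Q at hQ
  have hs : (z ^ 3 - 9 / 10) ^ 2 = 0 := by
    linear_combination (-5 / 8 * z ^ 3) * hQ + (5 / 8) * (16 * z ^ 6 + 3 * (u * z) * z ^ 3
      - 3 / 5 * 3 * z ^ 3 - 18 * z ^ 3 + 6 * ((u * z) ^ 2 - 3 / 5 * (u * z) + 9 / 25)) * hw
  have hz : 0 < z := by
    have : z ^ 3 - 9 / 10 = 0 := pow_eq_zero_iff two_ne_zero |>.mp hs
    by_contra! hz
    linarith [Odd.pow_nonpos (by decide : Odd 3) hz]
  nlinarith [mul_pos hu hz]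

lemma exists_nodeParam (hu : 0 < u) (hz : z ≠ 0) (hQ : Q u z = 0) : ∃ σ, NodeParam u z σ := by
  have hω := mul_add_ne_zero_of_Q_eq_zero hu hQ
  unfold Q at hQ
  obtain ⟨σ, hσ⟩ : ∃ σ, σ * (u * z + 3 / 5) = z ^ 3 - 9 / 10 :=
    ⟨_, div_mul_cancel₀ _ hω⟩
  -- with `ω = w + 3/5`, `s = 9/10 + σ ω`: `z³ Q = ω² (nodeWeight σ ω − (9 − 4σ)²/10)`
  have hnode : (u * z + 3 / 5) ^ 2 *
      (10 * nodeWeight σ * (u * z + 3 / 5) - (9 - 4 * σ) ^ 2) = 0 := by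
    linear_combination (norm := (unfold nodeWeight; ring)) 10 * z ^ 3 * hQ
      + 10 * (16 * (u * z) * (z ^ 3 + 9 / 10 + σ * (u * z + 3 / 5))
        + 8 * (z ^ 3 + 9 / 10 + σ * (u * z + 3 / 5)) + 3 * (u * z) ^ 2 - 18 * (u * z) - 9) * hσ
  have key : 10 * nodeWeight σ * (u * z + 3 / 5) = (9 - 4 * σ) ^ 2 := by
    have := (mul_eq_zero.mp hnode).resolve_left (pow_ne_zero 2 hω)
    linarith
  have he := nodeWeight_pos σ
  have hcube : 5 * nodeWeight σ * z ^ 3 = (3 + 2 * σ) ^ 3 := by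
    linear_combination (norm := (unfold nodeWeight; ring))
      (-5 * nodeWeight σ) * hσ + σ / 2 * key
  have hmul : 2 * nodeWeight σ * (u * z) = (3 + 2 * σ) * (3 - 8 * σ) := by
    linear_combination (norm := (unfold nodeWeight; ring)) key / 5
  refine ⟨σ, hcube, hmul, ?_⟩
  have h : (5 * nodeWeight σ * z ^ 3) *
      (8 * nodeWeight σ ^ 2 * u ^ 3 - 5 * (3 - 8 * σ) ^ 3) = 0 := by
    linear_combination (5 * ((2 * nodeWeight σ * (u * z)) ^ 2
      + (2 * nodeWeight σ * (u * z)) * ((3 + 2 * σ) * (3 - 8 * σ))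
      + ((3 + 2 * σ) * (3 - 8 * σ)) ^ 2)) * hmul - 5 * (3 - 8 * σ) ^ 3 * hcube
  have := (mul_eq_zero.mp h).resolve_left (by positivity)
  linarith

namespace NodeParam

lemma S_eq (h : NodeParam u z σ) :
    200 * nodeWeight σ ^ 2 * S u z = (9 - 4 * σ) ^ 3 * (-(1 + 4 * σ)) ^ 3 := by
  obtain ⟨h1, h2, h3⟩ := h
  unfold S
  linear_combination (norm := (unfold nodeWeight; ring))
    (64 * (5 * nodeWeight σ * z ^ 3 + (3 + 2 * σ) ^ 3) - 480 * nodeWeight σ) * h1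
    + 150 * (2 * nodeWeight σ * (u * z) + (3 + 2 * σ) * (3 - 8 * σ)) * h2 - 25 * h3

lemma Q'_eq (h : NodeParam u z σ) : 100 * nodeWeight σ ^ 2 * (z * Q' u z) =
    10 * (9 + 16 * σ) * (3 + 2 * σ) * (9 - 4 * σ) ^ 3 := by
  obtain ⟨h1, h2, h3⟩ := h
  unfold Q'
  linear_combination (norm := (unfold nodeWeight; ring))
    (640 * (2 * nodeWeight σ * (u * z)) + 480 * nodeWeight σ) * h1
    + (640 * (3 + 2 * σ) ^ 3 + 150 * (2 * nodeWeight σ * (u * z) + (3 + 2 * σ) * (3 - 8 * σ))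
      - 900 * nodeWeight σ) * h2

lemma H_eq (h : NodeParam u z σ) : 100 * nodeWeight σ ^ 2 * (z ^ 2 * H u z) =
    (1 + 4 * σ) * (3 + 2 * σ) ^ 2 * (128 * σ ^ 3 - 224 * σ ^ 2 + 564 * σ + 657) := by
  obtain ⟨h1, h2, h3⟩ := h
  unfold H
  linear_combination (norm := (unfold nodeWeight; ring))
    (32 * (5 * nodeWeight σ * z ^ 3 + (3 + 2 * σ) ^ 3) - 120 * nodeWeight σ) * h1
    + 25 * (2 * nodeWeight σ * (u * z) + (3 + 2 * σ) * (3 - 8 * σ)) * h2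

lemma cube_sub_two_eq (h : NodeParam u z σ) : 8 * nodeWeight σ ^ 2 * (u ^ 3 - 2) =
    (1024 * σ ^ 3 + 768 * σ ^ 2 - 108 * σ + 441) * (-(1 + 4 * σ)) := by
  linear_combination (norm := (unfold nodeWeight; ring)) h.cube_u_eq

lemma lt_three_eighths (h : NodeParam u z σ) (hu : 0 < u) : σ < 3 / 8 := by
  have : 0 < 5 * (3 - 8 * σ) ^ 3 := by
    rw [← h.cube_u_eq]
    have := nodeWeight_pos σ
    positivity
  linarith [(Odd.pow_pos_iff (by decide : Odd 3)).mp (pos_of_mul_pos_right this (by norm_num))]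

lemma mul_three_add_pos (h : NodeParam u z σ) (hz : z ≠ 0) : 0 < z * (3 + 2 * σ) := by
  have h6 : (z * (3 + 2 * σ)) ^ 3 = 5 * nodeWeight σ * z ^ 6 := by
    linear_combination (-z ^ 3) * h.cube_eq
  refine (Odd.pow_pos_iff (by decide : Odd 3)).mp ?_
  rw [h6]
  have := nodeWeight_pos σ
  positivity

lemma sign_Q' (h : NodeParam u z σ) (hu : 0 < u) (hz : z ≠ 0) :
    SignType.sign (Q' u z) = SignType.sign (9 + 16 * σ) := by
  have hzσ := h.mul_three_add_pos hz
  have h94 : 0 < 9 - 4 * σ := by linarith [h.lt_three_eighths hu]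
  have h32 : 3 + 2 * σ ≠ 0 := right_ne_zero_of_mul hzσ.ne'
  refine sign_eq_sign_of_mul_eq (c := 100 * nodeWeight σ ^ 2 * (z * (3 + 2 * σ)))
    (d := 10 * (3 + 2 * σ) ^ 2 * (9 - 4 * σ) ^ 3)
    (by have := nodeWeight_pos σ; positivity) (by positivity) ?_
  linear_combination (3 + 2 * σ) * h.Q'_eq

lemma sign_S (h : NodeParam u z σ) (hu : 0 < u) :
    SignType.sign (S u z) = SignType.sign (-(1 + 4 * σ)) := by
  have h94 : 0 < 9 - 4 * σ := by linarith [h.lt_three_eighths hu]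
  rw [sign_eq_sign_of_mul_eq (by have := nodeWeight_pos σ; positivity) (pow_pos h94 3) h.S_eq,
    sign_pow, SignType.pow_odd _ (by decide)]

lemma sign_cube_sub_two (h : NodeParam u z σ) (hu : 0 < u) (hσ : -9 / 16 ≤ σ) :
    SignType.sign (u ^ 3 - 2) = SignType.sign (-(1 + 4 * σ)) := by
  have hσ' := h.lt_three_eighths hu
  refine sign_eq_sign_of_mul_eq (by have := nodeWeight_pos σ; positivity) ?_ h.cube_sub_two_eq
  nlinarith [sq_nonneg σ, mul_nonneg (sq_nonneg σ) (by linarith : (0:ℝ) ≤ σ + 9 / 16)]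

end NodeParam

lemma exists_nodeParam_of_Q'_nonneg (hu : 0 < u) (hQ : Q u z = 0) (hQ' : 0 ≤ Q' u z) :
    z ≠ 0 ∧ ∃ σ, NodeParam u z σ ∧ -9 / 16 ≤ σ := by
  have hz : z ≠ 0 := by
    rintro rfl
    unfold Q' at hQ'
    linarith
  obtain ⟨σ, hσ⟩ := exists_nodeParam hu hz hQ
  refine ⟨hz, σ, hσ, ?_⟩
  have := sign_nonneg_iff.mp (hσ.sign_Q' hu hz ▸ sign_nonneg_iff.mpr hQ')
  linarith

lemma S_pos_of_Q'_nonpos (hu : 0 < u) (hQ : Q u z = 0) (hQ' : Q' u z ≤ 0) : 0 < S u z := by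
  rcases eq_or_ne z 0 with rfl | hz
  · unfold Q at hQ
    unfold S
    nlinarith
  obtain ⟨σ, hσ⟩ := exists_nodeParam hu hz hQ
  have h9 : 9 + 16 * σ ≤ 0 := sign_nonpos_iff.mp (hσ.sign_Q' hu hz ▸ sign_nonpos_iff.mpr hQ')
  exact sign_eq_one_iff.mp ((hσ.sign_S hu).trans (sign_pos (by linarith)))

lemma sign_S_of_Q'_nonneg (hu : 0 < u) (hQ : Q u z = 0) (hQ' : 0 ≤ Q' u z) :
    SignType.sign (S u z) = SignType.sign (u ^ 3 - 2) := by
  obtain ⟨-, σ, hσ, h9⟩ := exists_nodeParam_of_Q'_nonneg hu hQ hQ'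
  rw [hσ.sign_S hu, hσ.sign_cube_sub_two hu h9]

lemma H_neg_of_Q'_nonneg (hu : 0 < u) (hQ : Q u z = 0) (hQ' : 0 ≤ Q' u z) (h2 : 2 < u ^ 3) :
    H u z < 0 := by
  obtain ⟨hz, σ, hσ, h9⟩ := exists_nodeParam_of_Q'_nonneg hu hQ hQ'
  have h14 : 1 + 4 * σ < 0 := by
    have := (hσ.sign_cube_sub_two hu h9).symm.trans (sign_pos (sub_pos.mpr h2))
    linarith [sign_eq_one_iff.mp this]
  have h32 : 3 + 2 * σ ≠ 0 := right_ne_zero_of_mul (hσ.mul_three_add_pos hz).ne'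
  have hG : 0 < 128 * σ ^ 3 - 224 * σ ^ 2 + 564 * σ + 657 := by
    have hl : (0:ℝ) ≤ σ + 9 / 16 := by linarith
    have hr : (0:ℝ) ≤ -σ := by linarith
    nlinarith [mul_nonneg hl hr, mul_nonneg (mul_nonneg hl hr) hr]
  have hsign := sign_eq_sign_of_mul_eq (a := H u z) (b := 1 + 4 * σ)
    (c := 100 * nodeWeight σ ^ 2 * z ^ 2)
    (d := (3 + 2 * σ) ^ 2 * (128 * σ ^ 3 - 224 * σ ^ 2 + 564 * σ + 657))
    (by have := nodeWeight_pos σ; positivity) (by positivity) (by linear_combination hσ.H_eq)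
  exact sign_eq_neg_one_iff.mp (hsign.trans (sign_neg h14))

lemma hasDerivAt_Q (u z : ℝ) : HasDerivAt (Q u) (Q' u z) z :=
  (((((hasDerivAt_pow 4 z).const_mul (16 * u)).add ((hasDerivAt_pow 3 z).const_mul 8)).add
    ((hasDerivAt_pow 2 z).const_mul (3 * u ^ 2))).sub ((hasDerivAt_id z).const_mul (18 * u)))
    |>.add_const (6 * u ^ 3) |>.sub_const 9 |>.congr_deriv (by simp only [Q']; push_cast; ring)

lemma hasDerivAt_S (u z : ℝ) : HasDerivAt (S u) (6 * z * H u z) z :=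
  ((((hasDerivAt_pow 6 z).const_mul 8).sub ((hasDerivAt_pow 3 z).const_mul 12)).add
    ((hasDerivAt_pow 2 z).const_mul (3 * u ^ 2))).add_const 3 |>.sub_const (u ^ 3)
    |>.congr_deriv (by simp only [H]; push_cast; ring)

lemma continuous_Q (u : ℝ) : Continuous (Q u) :=
  continuous_iff_continuousAt.mpr fun z => (hasDerivAt_Q u z).continuousAt

lemma continuous_S (u : ℝ) : Continuous (S u) :=
  continuous_iff_continuousAt.mpr fun z => (hasDerivAt_S u z).continuousAt

lemma exists_gt_Q_pos (hu : 0 < u) (x : ℝ) : ∃ y, x < y ∧ 0 < Q u y := by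
  set y := |x| + 2
  refine ⟨y, by linarith [le_abs_self x], ?_⟩
  have hy : 2 ≤ y := by linarith [abs_nonneg x]
  have hy3 : 8 ≤ y ^ 3 := by nlinarith [pow_le_pow_left₀ (by norm_num) hy 3]
  unfold Q
  nlinarith [mul_pos (mul_pos hu (by linarith : (0:ℝ) < y))
    (by linarith : (0:ℝ) < 16 * y ^ 3 - 18), pow_pos hu 3, sq_nonneg (u * y)]

lemma exists_lt_Q_pos (hu : 0 < u) (x : ℝ) : ∃ y, y < x ∧ 0 < Q u y := by
  set M := |x| + 1 + 1 / u
  have hM : 1 ≤ M := by have := abs_nonneg x; have := one_div_pos.mpr hu; linarith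
  have huM : 1 ≤ u * M := by
    have : u * M = u * (|x| + 1) + 1 := by simp only [M, mul_add, mul_one_div_cancel hu.ne']
    nlinarith [abs_nonneg x]
  refine ⟨-M, by have := neg_abs_le x; have := one_div_pos.mpr hu; linarith, ?_⟩
  have hM3 : 1 ≤ M ^ 3 := one_le_pow₀ hM
  unfold Q
  nlinarith [mul_le_mul_of_nonneg_right huM (by positivity : (0:ℝ) ≤ 16 * M ^ 3),
    pow_pos hu 3, sq_nonneg (u * M)]

variable {a b x y : ℝ}

lemma Q_pos_of_gt (hu : 0 < u) (hab : a < b) (honly : ∀ t, Q u t = 0 → t = a ∨ t = b)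
    (hx : b < x) : 0 < Q u x := by
  obtain ⟨y, hxy, hy⟩ := exists_gt_Q_pos hu x
  refine pos_of_pos_of_forall_ne_zero (continuous_Q u) hy fun t ht hQt => ?_
  rw [uIcc_of_le hxy.le] at ht
  rcases honly t hQt with rfl | rfl <;> linarith [ht.1]

lemma Q_pos_of_lt (hu : 0 < u) (hab : a < b) (honly : ∀ t, Q u t = 0 → t = a ∨ t = b)
    (hx : x < a) : 0 < Q u x := by
  obtain ⟨y, hyx, hy⟩ := exists_lt_Q_pos hu x
  refine pos_of_pos_of_forall_ne_zero (continuous_Q u) hy fun t ht hQt => ?_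
  rw [uIcc_of_ge hyx.le] at ht
  rcases honly t hQt with rfl | rfl <;> linarith [ht.2]

lemma S_pos_of_nonpos (hu3 : u ^ 3 < 3) (hz : z ≤ 0) : 0 < S u z := by
  have : z ^ 3 ≤ 0 := Odd.pow_nonpos (by decide) hz
  unfold S
  nlinarith [pow_nonneg (sq_nonneg z) 3, sq_nonneg (u * z)]

lemma exists_sign_H_eq (hx : 0 ≤ x) (hxy : x < y) :
    ∃ m ∈ Ioo x y, SignType.sign (H u m) = SignType.sign (S u y - S u x) := by
  obtain ⟨m, hm, hslope⟩ := exists_hasDerivAt_eq_slope (S u) (fun z => 6 * z * H u z) hxy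
    (continuous_S u).continuousOn fun z _ => hasDerivAt_S u z
  refine ⟨m, hm, sign_eq_sign_of_mul_eq (c := 6 * m * (y - x)) (d := 1)
    (by nlinarith [hm.1]) one_pos ?_⟩
  rw [mul_right_comm, hslope, one_mul, div_mul_cancel₀ _ (sub_pos.mpr hxy).ne']

lemma H_le_max {p m n : ℝ} (hpm : p ≤ m) (hmn : m ≤ n) : H u m ≤ max (H u p) (H u n) := by
  have hconv : ConvexOn ℝ univ (H u) := by
    have h4 := (Even.convexOn_pow (𝕜 := ℝ) (by decide : Even 4)).smul
      (by norm_num : (0:ℝ) ≤ 8)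
    have h1 := (concaveOn_id (convex_univ (E := ℝ))).smul (by norm_num : (0:ℝ) ≤ 6)
    have := (h4.sub h1).add_const (u ^ 2)
    refine this.congr fun z _ => ?_
    simp only [H, Pi.add_apply, Pi.sub_apply, smul_eq_mul, id]
  refine hconv.le_on_segment (mem_univ _) (mem_univ _) ?_
  rw [segment_eq_Icc (hpm.trans hmn)]
  exact ⟨hpm, hmn⟩

lemma S_ne_zero_of_lt (hu3 : u ^ 3 < 3) (hHb : H u b ≤ 0) (hSb : 0 < S u b) (hxb : x < b) :
    S u x ≠ 0 := by
  intro hSx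
  have hx : 0 < x := by
    by_contra! hx
    exact (S_pos_of_nonpos hu3 hx).ne' hSx
  have hS0 := S_pos_of_nonpos (u := u) hu3 le_rfl
  obtain ⟨p, hp, hHp⟩ := exists_sign_H_eq (u := u) le_rfl hx
  obtain ⟨m, hm, hHm⟩ := exists_sign_H_eq (u := u) hx.le hxb
  have hHp' : H u p < 0 := sign_eq_neg_one_iff.mp (hHp.trans (sign_neg (by linarith)))
  have hHm' : 0 < H u m := sign_eq_one_iff.mp (hHm.trans (sign_pos (by linarith)))
  have := H_le_max (u := u) (hp.2.trans hm.1).le hm.2.le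
  linarith [max_le hHp'.le hHb]

lemma eq_of_S_eq_zero (hu3 : u ^ 3 < 3) (hSb : S u b < 0) (hxb : x < b) (hyb : y < b)
    (hSx : S u x = 0) (hSy : S u y = 0) : x = y := by
  wlog hxy : x < y generalizing x y
  · rcases (not_lt.mp hxy).lt_or_eq with h | h
    · exact (this hyb hxb hSy hSx h).symm
    · exact h.symm
  exfalso
  have hx : 0 < x := by
    by_contra! hx
    exact (S_pos_of_nonpos hu3 hx).ne' hSx
  have hS0 := S_pos_of_nonpos (u := u) hu3 le_rfl
  obtain ⟨p, hp, hHp⟩ := exists_sign_H_eq (u := u) le_rfl hx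
  obtain ⟨m, hm, hHm⟩ := exists_sign_H_eq (u := u) hx.le hxy
  obtain ⟨n, hn, hHn⟩ := exists_sign_H_eq (u := u) (hx.trans hxy).le hyb
  have hHp' : H u p < 0 := sign_eq_neg_one_iff.mp (hHp.trans (sign_neg (by linarith)))
  have hHm' : H u m = 0 :=
    sign_eq_zero_iff.mp (hHm.trans (by rw [hSx, hSy, sub_self, sign_zero]))
  have hHn' : H u n < 0 := sign_eq_neg_one_iff.mp (hHn.trans (sign_neg (by linarith)))
  have := H_le_max (u := u) (hp.2.trans hm.1).le (hm.2.trans hn.1).le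
  linarith [max_lt hHp' hHn']

def rootScale (τ : ℝ) : ℝ := (3 : ℝ) ^ ((1 : ℝ) / 3) * (1 - 4 * τ) ^ ((1 : ℝ) / 3)

variable {τ : ℝ}

lemma rootScale_eq (hτ : τ < 1 / 4) : rootScale τ = (3 * (1 - 4 * τ)) ^ ((1 : ℝ) / 3) :=
  (Real.mul_rpow (by norm_num) (by linarith)).symm

lemma rootScale_pos (hτ : τ < 1 / 4) : 0 < rootScale τ := by
  rw [rootScale_eq hτ]
  exact Real.rpow_pos_of_pos (by linarith) _

lemma rootScale_cube (hτ : τ < 1 / 4) : rootScale τ ^ 3 = 3 - 12 * τ := by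
  rw [rootScale_eq hτ, ← Real.rpow_natCast, ← Real.rpow_mul (by linarith)]
  norm_num
  ring

lemma ccf_eq (hτ : τ < 1 / 4) : ccf τ = -(3 * rootScale τ ^ 2 / 4) := by
  have h : 243 * (1 - 4 * τ) ^ 2 / 64 = (3 * rootScale τ ^ 2 / 4) ^ 3 := by
    linear_combination (-(27 : ℝ) / 64) * (rootScale τ ^ 3 + (3 - 12 * τ)) * rootScale_cube hτ
  rw [ccf, h, one_div, ← Nat.cast_ofNat (R := ℝ) (n := 3),
    Real.pow_rpow_inv_natCast (by positivity) (by norm_num)]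

lemma q1_ofReal (hτ : τ < 1 / 4) (x : ℝ) :
    q1 τ (x : ℂ) = ((16 / 9 * Q (rootScale τ) x : ℝ) : ℂ) := by
  set α : ℝ := 3 ^ ((1 : ℝ) / 3)
  set β : ℝ := (1 - 4 * τ) ^ ((1 : ℝ) / 3)
  have hα : α ^ 3 = 3 := by
    rw [← Real.rpow_natCast, ← Real.rpow_mul (by norm_num)]
    norm_num
  have h5 : (3 : ℝ) ^ ((5 : ℝ) / 3) * α = 9 := by
    rw [← Real.rpow_add (by norm_num)]
    norm_num
  have h2 : (1 - 4 * τ) ^ ((2 : ℝ) / 3) = β ^ 2 := by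
    rw [← Real.rpow_natCast, ← Real.rpow_mul (by linarith)]
    norm_num
  have hα0 : α ≠ 0 := (Real.rpow_pos_of_pos (by norm_num) _).ne'
  have e4 : 256 / (3 : ℝ) ^ ((5 : ℝ) / 3) * β = 256 / 9 * (α * β) := by
    rw [div_mul_eq_mul_div, div_eq_iff (Real.rpow_pos_of_pos (by norm_num) _).ne']
    linear_combination (-256 / 9 * β) * h5
  have e2 : 16 / α * (1 - 4 * τ) ^ ((2 : ℝ) / 3) = 16 / 3 * (α * β) ^ 2 := by
    rw [h2, div_mul_eq_mul_div, div_eq_iff hα0]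
    linear_combination (-16 / 3 * β ^ 2) * hα
  have hq1 : q1 τ (x : ℂ) = ((256 / (3 : ℝ) ^ ((5 : ℝ) / 3) * β * x ^ 4 + 128 / 9 * x ^ 3
      + 16 / α * (1 - 4 * τ) ^ ((2 : ℝ) / 3) * x ^ 2 - 32 * α * β * x
      + 16 * (1 - 8 * τ) : ℝ) : ℂ) := by
    unfold q1
    push_cast
    ring
  rw [hq1, e4, e2]
  congr 1
  have hu3 := rootScale_cube hτ
  unfold Q
  unfold rootScale at hu3 ⊢
  linear_combination (-32 / 3) * hu3

lemma DD_ofReal (hτ : τ < 1 / 4) (x : ℝ) :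
    DD τ (x : ℂ) = ((-(S (rootScale τ) x) / 4 : ℝ) : ℂ) := by
  have hu3 := congrArg (fun r : ℝ => (r : ℂ)) (rootScale_cube hτ)
  push_cast at hu3
  rw [DD, ccf_eq hτ]
  unfold S
  push_cast
  linear_combination (-1 / 4 : ℂ) * hu3

lemma q1_ofReal_eq_zero_iff (hτ : τ < 1 / 4) (x : ℝ) :
    q1 τ (x : ℂ) = 0 ↔ Q (rootScale τ) x = 0 := by
  rw [q1_ofReal hτ, Complex.ofReal_eq_zero]
  constructor <;> intro h <;> linarith

lemma DD_ofReal_eq_zero_iff (hτ : τ < 1 / 4) (x : ℝ) :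
    DD τ (x : ℂ) = 0 ↔ S (rootScale τ) x = 0 := by
  rw [DD_ofReal hτ, Complex.ofReal_eq_zero]
  constructor <;> intro h <;> linarith

end ZerosOfD

open ZerosOfD

/-- For `τ ∈ (0, 1/4)` with `a₁ < b₁` the two real roots of `q₁`:
for `0 < τ < 1/12` the polynomial `D` has no zeros in `(a₁, b₁)`; for `1/12 < τ < 1/4` it has
exactly one zero there; `D(b₁) = 0` iff `τ = 1/12`; and `D(a₁) ≠ 0` for all `τ ∈ (0,1/4)`. -/
theorem zeros_of_D (τ a₁ b₁ : ℝ) (hτ : τ ∈ Set.Ioo (0 : ℝ) (1 / 4))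
    (hab : a₁ < b₁) (ha : q1 τ ((a₁ : ℝ) : ℂ) = 0) (hb : q1 τ ((b₁ : ℝ) : ℂ) = 0)
    (honly : ∀ x : ℝ, q1 τ ((x : ℝ) : ℂ) = 0 → x = a₁ ∨ x = b₁) :
    (τ < 1 / 12 → ∀ x : ℝ, x ∈ Set.Ioo a₁ b₁ → DD τ ((x : ℝ) : ℂ) ≠ 0) ∧
    (1 / 12 < τ → ∃! x : ℝ, x ∈ Set.Ioo a₁ b₁ ∧ DD τ ((x : ℝ) : ℂ) = 0) ∧
    (DD τ ((b₁ : ℝ) : ℂ) = 0 ↔ τ = 1 / 12) ∧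
    DD τ ((a₁ : ℝ) : ℂ) ≠ 0 := by
  obtain ⟨hτ0, hτ4⟩ := hτ
  simp only [q1_ofReal_eq_zero_iff hτ4] at ha hb honly
  simp only [ne_eq, DD_ofReal_eq_zero_iff hτ4]
  set u := rootScale τ
  have hu : 0 < u := rootScale_pos hτ4
  have hu3 : u ^ 3 = 3 - 12 * τ := rootScale_cube hτ4
  have hu3' : u ^ 3 < 3 := by linarith
  have hSa : 0 < S u a₁ := S_pos_of_Q'_nonpos hu ha <|
    (hasDerivAt_Q u a₁).nonpos_of_pos_left ha fun _ hx => Q_pos_of_lt hu hab honly hx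
  have hQ'b : 0 ≤ Q' u b₁ :=
    (hasDerivAt_Q u b₁).nonneg_of_pos_right hb fun _ hx => Q_pos_of_gt hu hab honly hx
  have hSb := sign_S_of_Q'_nonneg hu hb hQ'b
  refine ⟨fun hτ12 x hx => ?_, fun hτ12 => ?_, ?_, hSa.ne'⟩
  · have h2 : 2 < u ^ 3 := by linarith
    exact S_ne_zero_of_lt hu3' (H_neg_of_Q'_nonneg hu hb hQ'b h2).le
      (sign_eq_one_iff.mp (hSb.trans (sign_pos (by linarith)))) hx.2
  · have hSb' : S u b₁ < 0 := sign_eq_neg_one_iff.mp (hSb.trans (sign_neg (by linarith)))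
    obtain ⟨x, hx, hSx⟩ :=
      intermediate_value_Ioo' hab.le (continuous_S u).continuousOn ⟨hSb', hSa⟩
    exact ⟨x, ⟨hx, hSx⟩, fun y hy => eq_of_S_eq_zero hu3' hSb' hy.1.2 hx.2 hy.2 hSx⟩
  · rw [← sign_eq_zero_iff, hSb, sign_eq_zero_iff, hu3]
    constructor <;> intro h <;> linarith
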